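/- Let p be prime, let θ be defined by p^θ ∥ k, and let a be an integer with (a, p) = 1. Then W(p^t, a) = 0 whenever p ≥ 3 and t ≥ θ + 2, and also whenever p = 2 and t ≥ θ + 3, where W(q, a) = Σ_{r=1, (r,q)=1}^{q} e(a·r^k/q). -/

import Mathlib

/-- The complete exponential sum `W(q,a) = Σ_{r=1, (r,q)=1}^q e(a·r^k/q)`,
with `e(z) = e^{2πiz}`. -/
noncomputable def expSumW (k q : ℕ) (a : ℤ) : ℂ :=
  ∑ r ∈ (Finset.Icc 1 q).filter (fun r => Nat.gcd r q = 1),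
    Complex.exp (2 * Real.pi * Complex.I * ((a : ℂ) * (r : ℂ) ^ k / (q : ℂ)))

/-!
Write `t = n + θ + 1`, so that `n ≥ 1` (and `n ≥ 2` if `p = 2`), and `k = p^θ k'` with `p ∤ k'`.
Every reduced residue modulo `p^t` is uniquely `u + p^n v` with `u < p^n`, `p ∤ u` and
`v < p^(θ+1)`. By the binomial theorem `(u + p^n v)^k ≡ u^k + k u^(k-1) p^n v (mod p^t)`: the
`e`-th term with `e ≥ 2` is divisible by `p^t` since `v_p(C(k, e)) ≥ θ - v_p(e)` and `v_p(e)` is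
small compared with `(e - 1) n`. So for fixed `u` the summands are a constant times `ζ^v` with
`ζ = e(a k' u^(k-1) / p) ≠ 1` a `p`-th root of unity, and the sum over `v` vanishes.
-/

open Finset Complex

namespace Nat

lemma factorization_add_le_mul {p e n : ℕ} (hp : p.Prime) (he : 2 ≤ e) (hn : 1 ≤ n)
    (hpn : 3 ≤ p ∨ 2 ≤ n) : e.factorization p + n + 1 ≤ n * e := by
  have hle : p ^ e.factorization p ≤ e := ordProj_le p (by omega)
  rcases hpn with hp3 | hn2
  · have h3 : 1 + e.factorization p * 2 ≤ p ^ e.factorization p :=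
      (one_add_le_pow_of_two_add_nonneg (by norm_num) _).trans (Nat.pow_le_pow_left hp3 _)
    nlinarith
  · have := Nat.lt_pow_self hp.one_lt (n := e.factorization p)
    nlinarith

lemma pow_dvd_choose_mul_ordProj {p θ k e : ℕ} (hp : p.Prime) (hθ : p ^ θ ∣ k) (he : e ≠ 0) :
    p ^ θ ∣ k.choose e * p ^ e.factorization p := by
  have hdvd : p ^ θ ∣ k.choose e * p ^ e.factorization p * (e / p ^ e.factorization p) := by
    rw [mul_assoc, ordProj_mul_ordCompl_eq_self]
    obtain ⟨e, rfl⟩ := exists_eq_succ_of_ne_zero he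
    rcases k with _ | k
    · simp
    · rw [← add_one_mul_choose_eq]
      exact hθ.mul_right _
  exact ((coprime_ordCompl hp he).pow_left θ).dvd_of_dvd_mul_right hdvd

lemma pow_dvd_choose_mul_pow {p θ k n e : ℕ} (hp : p.Prime) (hθ : p ^ θ ∣ k) (hn : 1 ≤ n)
    (hpn : 3 ≤ p ∨ 2 ≤ n) (he : 2 ≤ e) : p ^ (n + θ + 1) ∣ k.choose e * p ^ (n * e) := by
  have hv := factorization_add_le_mul hp he hn hpn
  calc p ^ (n + θ + 1) ∣ p ^ θ * p ^ (n * e - e.factorization p) := by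
        rw [← pow_add]; exact pow_dvd_pow _ (by omega)
    _ ∣ k.choose e * p ^ e.factorization p * p ^ (n * e - e.factorization p) :=
        mul_dvd_mul_right (pow_dvd_choose_mul_ordProj hp hθ (by omega)) _
    _ = k.choose e * p ^ (n * e) := by rw [mul_assoc, ← pow_add, Nat.add_sub_cancel' (by omega)]

end Nat

lemma pow_dvd_add_pow_sub {R : Type*} [CommRing R] {p θ k n : ℕ} (hp : p.Prime) (hθ : p ^ θ ∣ k)
    (hn : 1 ≤ n) (hpn : 3 ≤ p ∨ 2 ≤ n) (u v : R) :
    (p : R) ^ (n + θ + 1) ∣ (u + p ^ n * v) ^ k - (u ^ k + k * u ^ (k - 1) * (p ^ n * v)) := by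
  rcases k with _ | k
  · simp
  have hsum : (p : R) ^ (n + θ + 1) ∣
      ∑ i ∈ range k, (p ^ n * v) ^ (i + 2) * u ^ (k + 1 - (i + 2)) * (k + 1).choose (i + 2) := by
    refine dvd_sum fun i _ ↦ ?_
    have := Nat.cast_dvd_cast (α := R)
      (Nat.pow_dvd_choose_mul_pow hp hθ hn hpn (e := i + 2) (by omega))
    push_cast at this
    exact this.trans (Dvd.intro (v ^ (i + 2) * u ^ (k + 1 - (i + 2))) (by ring))
  rw [add_comm u, add_pow, sum_range_succ', sum_range_succ']
  convert hsum using 1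
  simp only [pow_zero, pow_one, Nat.choose_zero_right, Nat.choose_one_right, zero_add, Nat.cast_one]
  push_cast
  ring

lemma Finset.sum_range_mul_eq_sum_sum {M : Type*} [AddCommMonoid M] (f : ℕ → M) (a b : ℕ) :
    ∑ r ∈ range (a * b), f r = ∑ u ∈ range a, ∑ v ∈ range b, f (u + a * v) := by
  induction b with
  | zero => simp
  | succ b ih =>
    rw [mul_add_one, sum_range_add, ih]
    simp [sum_range_succ, sum_add_distrib, add_comm]

lemma filter_Icc_gcd_eq_filter_range {q : ℕ} (hq : q ≠ 1) :
    (Icc 1 q).filter (fun r ↦ Nat.gcd r q = 1) = (range q).filter (fun r ↦ Nat.gcd r q = 1) := by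
  ext r
  simp only [mem_filter, mem_Icc, mem_range]
  constructor
  · rintro ⟨⟨-, hrq⟩, h⟩
    refine ⟨hrq.lt_of_ne ?_, h⟩
    rintro rfl
    exact hq (by simpa using h)
  · rintro ⟨hrq, h⟩
    refine ⟨⟨Nat.pos_of_ne_zero ?_, hrq.le⟩, h⟩
    rintro rfl
    exact hq (by simpa using h)

lemma sum_filter_gcd_prime_pow_eq {M : Type*} [AddCommMonoid M] {p n : ℕ} (hp : p.Prime)
    (hn : n ≠ 0) (m : ℕ) (f : ℕ → M) :
    ∑ r ∈ (range (p ^ (n + m))).filter (fun r ↦ Nat.gcd r (p ^ (n + m)) = 1), f r =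
      ∑ u ∈ (range (p ^ n)).filter (fun u ↦ ¬ p ∣ u), ∑ v ∈ range (p ^ m), f (u + p ^ n * v) := by
  have hcop (r : ℕ) : Nat.gcd r (p ^ (n + m)) = 1 ↔ ¬ p ∣ r :=
    (Nat.coprime_pow_right_iff (by omega) r p).trans (Nat.coprime_comm.trans hp.coprime_iff_not_dvd)
  have hdvd (u v : ℕ) : p ∣ u + p ^ n * v ↔ p ∣ u :=
    Nat.dvd_add_left (dvd_mul_of_dvd_left (dvd_pow_self p hn) v)
  simp_rw [sum_filter, hcop, pow_add, sum_range_mul_eq_sum_sum, hdvd]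
  exact sum_congr rfl fun u _ ↦ by split_ifs <;> simp

lemma sum_range_exp_eq_zero {q N : ℕ} {c : ℤ} (hc : ¬ (q : ℤ) ∣ c) (hN : q ∣ N) :
    ∑ v ∈ range N, exp (2 * Real.pi * I * (c * v / q)) = 0 := by
  rcases eq_or_ne q 0 with rfl | hq
  · simp [zero_dvd_iff.mp hN]
  set z := exp (2 * Real.pi * I * (c / q))
  have hz1 : z ≠ 1 := by
    rw [Ne, exp_eq_one_iff]
    rintro ⟨j, hj⟩
    refine hc ⟨j, ?_⟩
    have : (c : ℂ) = q * j := by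
      field_simp at hj
      linear_combination hj
    exact_mod_cast this
  have hzq : z ^ q = 1 := by
    rw [← exp_nat_mul, ← exp_int_mul_two_pi_mul_I c]
    congr 1
    field_simp
  obtain ⟨N, rfl⟩ := hN
  have hterm (v : ℕ) : exp (2 * Real.pi * I * (c * v / q)) = z ^ v := by
    rw [← exp_nat_mul]; ring_nf
  simp_rw [hterm, geom_sum_eq hz1, pow_mul, hzq, one_pow, sub_self, zero_div]

lemma sum_range_exp_add_pow_mul_eq_zero {p θ k' n u : ℕ} {a : ℤ} (hp : p.Prime) (hn : 1 ≤ n)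
    (hpn : 3 ≤ p ∨ 2 ≤ n) (hpa : ¬ (p : ℤ) ∣ a) (hpk' : ¬ p ∣ k') (hpu : ¬ p ∣ u) :
    ∑ v ∈ range (p ^ (θ + 1)), exp (2 * Real.pi * I *
      (a * ((u + p ^ n * v : ℕ) : ℂ) ^ (p ^ θ * k') / ((p ^ (n + (θ + 1)) : ℕ) : ℂ))) = 0 := by
  set c : ℤ := a * k' * u ^ (p ^ θ * k' - 1)
  have hpc : ¬ (p : ℤ) ∣ c := by
    have hP := Nat.prime_iff_prime_int.mp hp
    simp only [c, hP.dvd_mul, not_or]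
    exact ⟨⟨hpa, by exact_mod_cast hpk'⟩, fun h ↦ hpu (by exact_mod_cast hP.dvd_of_dvd_pow h)⟩
  have hterm (v : ℕ) : exp (2 * Real.pi * I *
      (a * ((u + p ^ n * v : ℕ) : ℂ) ^ (p ^ θ * k') / ((p ^ (n + (θ + 1)) : ℕ) : ℂ))) =
      exp (2 * Real.pi * I * (a * (u : ℂ) ^ (p ^ θ * k') / ((p ^ (n + (θ + 1)) : ℕ) : ℂ))) *
        exp (2 * Real.pi * I * (c * v / p)) := by
    obtain ⟨M, hM⟩ :=
      pow_dvd_add_pow_sub (R := ℤ) (k := p ^ θ * k') hp (dvd_mul_right _ k') hn hpn u v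
    have hMC := congrArg (Int.cast : ℤ → ℂ) hM
    have hp0 : (p : ℂ) ≠ 0 := by exact_mod_cast hp.ne_zero
    push_cast [c] at hMC ⊢
    rw [← exp_add, exp_eq_exp_iff_exists_int]
    refine ⟨a * M, ?_⟩
    field_simp
    push_cast
    linear_combination (a * p) * hMC
  rw [sum_congr rfl fun v _ ↦ hterm v, ← mul_sum,
    sum_range_exp_eq_zero hpc (dvd_pow_self p θ.succ_ne_zero), mul_zero]

theorem stmt11_general (k : ℕ) (p : ℕ) (hp : p.Prime) (θ : ℕ)
    (hθ1 : p ^ θ ∣ k) (hθ2 : ¬ p ^ (θ + 1) ∣ k)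
    (a : ℤ) (ha : Int.gcd a p = 1) (t : ℕ)
    (ht : (3 ≤ p ∧ θ + 2 ≤ t) ∨ (p = 2 ∧ θ + 3 ≤ t)) :
    expSumW k (p ^ t) a = 0 := by
  obtain ⟨k', rfl⟩ := hθ1
  have hpk' : ¬ p ∣ k' := fun h ↦ hθ2 (pow_succ p θ ▸ mul_dvd_mul_left _ h)
  have hpa : ¬ (p : ℤ) ∣ a := by
    rintro ⟨b, rfl⟩
    simp [hp.ne_one] at ha
  obtain ⟨n, rfl, hn, hpn⟩ : ∃ n, t = n + (θ + 1) ∧ 1 ≤ n ∧ (3 ≤ p ∨ 2 ≤ n) :=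
    ⟨t - (θ + 1), by omega, by omega, by omega⟩
  rw [expSumW, filter_Icc_gcd_eq_filter_range (Nat.one_lt_pow (by omega) hp.one_lt).ne',
    sum_filter_gcd_prime_pow_eq hp (by omega)]
  exact sum_eq_zero fun u hu ↦
    sum_range_exp_add_pow_mul_eq_zero hp hn hpn hpa hpk' (mem_filter.1 hu).2

/-- Let `p` be prime, `θ` defined by `p^θ ∥ k`, and `a` an integer with
`(a, p) = 1`. Then `W(p^t, a) = 0` whenever `p ≥ 3` and `t ≥ θ + 2`, and also whenever
`p = 2` and `t ≥ θ + 3`. -/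
theorem stmt11 (k : ℕ) (hk : 2 ≤ k) (p : ℕ) (hp : p.Prime) (θ : ℕ)
    (hθ1 : p ^ θ ∣ k) (hθ2 : ¬ p ^ (θ + 1) ∣ k)
    (a : ℤ) (ha : Int.gcd a p = 1) (t : ℕ)
    (ht : (3 ≤ p ∧ θ + 2 ≤ t) ∨ (p = 2 ∧ θ + 3 ≤ t)) :
    expSumW k (p ^ t) a = 0 :=
  stmt11_general k p hp θ hθ1 hθ2 a ha t ht
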